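/- Let (A, μ, Δ, α, c, R) be a quasi-triangular Hom-bialgebra with α surjective, and set Rᵅ = (α ⊗ α)(R). Then (A, μ, Δ, α, c, Rᵅ) is also a quasi-triangular Hom-bialgebra; i.e., Rᵅ satisfies (Δ ⊗ α)(Rᵅ) = Rᵅ₁₃Rᵅ₂₃, (α ⊗ Δ)(Rᵅ) = Rᵅ₁₃Rᵅ₁₂, and ((τ∘Δ)(x))Rᵅ = RᵅΔ(x) for all x ∈ A. -/

import Mathlib

/-!
Apply `α ⊗ α` (resp. `(α ⊗ α) ⊗ α`) to the three axioms satisfied by `R`. Since `α` is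
multiplicative and commutes with `Δ`, the left-hand sides become the corresponding expressions
in `Rᵅ`. On the right-hand sides every tensor slot of `R₁₃R₂₃` and `R₁₃R₁₂` contains one
factor `c`, and `α (μ u c) = α (α u) = μ (α u) c`, so twisting these products amounts to
twisting `R` inside them. For the third axiom write `x = α y`, so that `Δ x = (α ⊗ α)(Δ y)`.
-/

open TensorProduct

variable {k : Type*} [CommRing k] {A : Type*} [AddCommGroup A] [Module k A]

/-- Componentwise product on `A ⊗ A` induced by a bilinear multiplication `μ`. -/
noncomputable def mulT2 (μ : A →ₗ[k] A →ₗ[k] A) (X Y : A ⊗[k] A) : A ⊗[k] A :=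
  ((TensorProduct.map (TensorProduct.lift μ) (TensorProduct.lift μ)) ∘ₗ
    (TensorProduct.tensorTensorTensorComm k A A A A).toLinearMap) (X ⊗ₜ[k] Y)

/-- Componentwise product on `(A ⊗ A) ⊗ A` induced by `μ`. -/
noncomputable def mulT3 (μ : A →ₗ[k] A →ₗ[k] A) (X Y : (A ⊗[k] A) ⊗[k] A) :
    (A ⊗[k] A) ⊗[k] A :=
  ((TensorProduct.map
      ((TensorProduct.map (TensorProduct.lift μ) (TensorProduct.lift μ)) ∘ₗ
        (TensorProduct.tensorTensorTensorComm k A A A A).toLinearMap)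
      (TensorProduct.lift μ)) ∘ₗ
    (TensorProduct.tensorTensorTensorComm k (A ⊗[k] A) A (A ⊗[k] A) A).toLinearMap)
    (X ⊗ₜ[k] Y)

/-- `R₁₂ = R ⊗ c`. -/
noncomputable def R12e (c : A) (R : A ⊗[k] A) : (A ⊗[k] A) ⊗[k] A := R ⊗ₜ[k] c

/-- `R₂₃ = c ⊗ R`. -/
noncomputable def R23e (c : A) (R : A ⊗[k] A) : (A ⊗[k] A) ⊗[k] A :=
  (TensorProduct.assoc k A A A).symm (c ⊗ₜ[k] R)

/-- `R₁₃ = (τ ⊗ Id)(R₂₃)`. -/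
noncomputable def R13e (c : A) (R : A ⊗[k] A) : (A ⊗[k] A) ⊗[k] A :=
  TensorProduct.map (TensorProduct.comm k A A).toLinearMap LinearMap.id (R23e c R)

section ComponentwiseProduct

variable (μ : A →ₗ[k] A →ₗ[k] A)

@[simp]
lemma mulT2_tmul (a b x y : A) :
    mulT2 μ (a ⊗ₜ[k] b) (x ⊗ₜ[k] y) = μ a x ⊗ₜ[k] μ b y := by
  simp [mulT2]

@[simp]
lemma mulT3_tmul (a b e x y z : A) :
    mulT3 μ ((a ⊗ₜ[k] b) ⊗ₜ[k] e) ((x ⊗ₜ[k] y) ⊗ₜ[k] z)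
      = (μ a x ⊗ₜ[k] μ b y) ⊗ₜ[k] μ e z := by
  simp [mulT3]

@[simp]
lemma mulT2_zero_left (Y : A ⊗[k] A) : mulT2 μ 0 Y = 0 := by
  simp [mulT2]

@[simp]
lemma mulT2_zero_right (X : A ⊗[k] A) : mulT2 μ X 0 = 0 := by
  simp [mulT2]

@[simp]
lemma mulT2_add_left (X X' Y : A ⊗[k] A) :
    mulT2 μ (X + X') Y = mulT2 μ X Y + mulT2 μ X' Y := by
  simp [mulT2, add_tmul]

@[simp]
lemma mulT2_add_right (X Y Y' : A ⊗[k] A) :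
    mulT2 μ X (Y + Y') = mulT2 μ X Y + mulT2 μ X Y' := by
  simp [mulT2, tmul_add]

@[simp]
lemma mulT3_zero_left (Y : (A ⊗[k] A) ⊗[k] A) : mulT3 μ 0 Y = 0 := by
  simp [mulT3]

@[simp]
lemma mulT3_zero_right (X : (A ⊗[k] A) ⊗[k] A) : mulT3 μ X 0 = 0 := by
  simp [mulT3]

@[simp]
lemma mulT3_add_left (X X' Y : (A ⊗[k] A) ⊗[k] A) :
    mulT3 μ (X + X') Y = mulT3 μ X Y + mulT3 μ X' Y := by
  simp [mulT3, add_tmul]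

@[simp]
lemma mulT3_add_right (X Y Y' : (A ⊗[k] A) ⊗[k] A) :
    mulT3 μ X (Y + Y') = mulT3 μ X Y + mulT3 μ X Y' := by
  simp [mulT3, tmul_add]

end ComponentwiseProduct

section Legs

variable (c : A)

@[simp]
lemma R12e_zero : R12e (k := k) c 0 = 0 := zero_tmul _ c

@[simp]
lemma R12e_add (X X' : A ⊗[k] A) : R12e c (X + X') = R12e c X + R12e c X' := add_tmul _ _ c

@[simp]
lemma R23e_zero : R23e (k := k) c 0 = 0 := by simp [R23e]

@[simp]
lemma R23e_add (X X' : A ⊗[k] A) : R23e c (X + X') = R23e c X + R23e c X' := by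
  simp [R23e, tmul_add]

@[simp]
lemma R23e_tmul (a b : A) : R23e c (a ⊗ₜ[k] b) = (c ⊗ₜ[k] a) ⊗ₜ[k] b := rfl

@[simp]
lemma R13e_zero : R13e (k := k) c 0 = 0 := by simp [R13e]

@[simp]
lemma R13e_add (X X' : A ⊗[k] A) : R13e c (X + X') = R13e c X + R13e c X' := by
  simp [R13e]

@[simp]
lemma R13e_tmul (a b : A) : R13e c (a ⊗ₜ[k] b) = (a ⊗ₜ[k] c) ⊗ₜ[k] b := rfl

end Legs

section Twist

variable {μ : A →ₗ[k] A →ₗ[k] A} {α : A →ₗ[k] A} {c : A}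

lemma map_mulT2 (hαμ : ∀ x y : A, α (μ x y) = μ (α x) (α y)) (X Y : A ⊗[k] A) :
    map α α (mulT2 μ X Y) = mulT2 μ (map α α X) (map α α Y) := by
  induction X using TensorProduct.induction_on with
  | zero => simp
  | add X X' hX hX' => simp [hX, hX']
  | tmul a b =>
    induction Y using TensorProduct.induction_on with
    | zero => simp
    | add Y Y' hY hY' => simp [hY, hY']
    | tmul x y => simp [hαμ]

variable (hαμ : ∀ x y : A, α (μ x y) = μ (α x) (α y))
  (hcl : ∀ x : A, μ c x = α x) (hcr : ∀ x : A, μ x c = α x)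
include hαμ hcl hcr

lemma map_mulT3_R13e_R23e (X Y : A ⊗[k] A) :
    map (map α α) α (mulT3 μ (R13e c X) (R23e c Y))
      = mulT3 μ (R13e c (map α α X)) (R23e c (map α α Y)) := by
  induction X using TensorProduct.induction_on with
  | zero => simp
  | add X X' hX hX' => simp only [map_add, R13e_add, mulT3_add_left, hX, hX']
  | tmul a b =>
    induction Y using TensorProduct.induction_on with
    | zero => simp
    | add Y Y' hY hY' => simp only [map_add, R23e_add, mulT3_add_right, hY, hY']
    | tmul x y => simp [hcl, hcr, hαμ]

lemma map_mulT3_R13e_R12e (X Y : A ⊗[k] A) :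
    map (map α α) α (mulT3 μ (R13e c X) (R12e c Y))
      = mulT3 μ (R13e c (map α α X)) (R12e c (map α α Y)) := by
  induction X using TensorProduct.induction_on with
  | zero => simp
  | add X X' hX hX' => simp only [map_add, R13e_add, mulT3_add_left, hX, hX']
  | tmul a b =>
    induction Y using TensorProduct.induction_on with
    | zero => simp
    | add Y Y' hY hY' => simp only [map_add, R12e_add, mulT3_add_right, hY, hY']
    | tmul x y => simp [R12e, hcl, hcr, hαμ]

end Twist
section TwistedR

variable {μ : A →ₗ[k] A →ₗ[k] A} {Δ : A →ₗ[k] A ⊗[k] A} {α : A →ₗ[k] A} {c : A} {R : A ⊗[k] A}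
  (hαμ : ∀ x y : A, α (μ x y) = μ (α x) (α y)) (hαΔ : Δ ∘ₗ α = map α α ∘ₗ Δ)
include hαμ hαΔ

lemma twisted_R_map_comul_alpha (hcl : ∀ x : A, μ c x = α x) (hcr : ∀ x : A, μ x c = α x)
    (hR1 : map Δ α R = mulT3 μ (R13e c R) (R23e c R)) :
    map Δ α (map α α R) = mulT3 μ (R13e c (map α α R)) (R23e c (map α α R)) := by
  have hnat : map Δ α (map α α R) = map (map α α) α (map Δ α R) := by
    rw [map_map, map_map, hαΔ]
  rw [hnat, hR1, map_mulT3_R13e_R23e hαμ hcl hcr]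

lemma twisted_R_map_alpha_comul (hcl : ∀ x : A, μ c x = α x) (hcr : ∀ x : A, μ x c = α x)
    (hR2 : (TensorProduct.assoc k A A A).symm (map α Δ R) = mulT3 μ (R13e c R) (R12e c R)) :
    (TensorProduct.assoc k A A A).symm (map α Δ (map α α R))
      = mulT3 μ (R13e c (map α α R)) (R12e c (map α α R)) := by
  have hnat : map α Δ (map α α R) = map α (map α α) (map α Δ R) := by
    rw [map_map, map_map, hαΔ]
  rw [hnat, ← map_map_assoc_symm, hR2, map_mulT3_R13e_R12e hαμ hcl hcr]

lemma twisted_R_quasi_cocommutative (hsurj : Function.Surjective α)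
    (hR3 : ∀ x : A, mulT2 μ (TensorProduct.comm k A A (Δ x)) R = mulT2 μ R (Δ x)) (x : A) :
    mulT2 μ (TensorProduct.comm k A A (Δ x)) (map α α R) = mulT2 μ (map α α R) (Δ x) := by
  obtain ⟨y, rfl⟩ := hsurj x
  have hΔ : Δ (α y) = map α α (Δ y) := LinearMap.congr_fun hαΔ y
  rw [hΔ, ← map_comm, ← map_mulT2 hαμ, hR3, map_mulT2 hαμ]

end TwistedR

theorem twisted_R_quasi_triangular_general
    (μ : A →ₗ[k] A →ₗ[k] A) (Δ : A →ₗ[k] A ⊗[k] A) (α : A →ₗ[k] A) (c : A) (R : A ⊗[k] A)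
    (hαμ : ∀ x y : A, α (μ x y) = μ (α x) (α y))
    (hαΔ : Δ ∘ₗ α = TensorProduct.map α α ∘ₗ Δ)
    (hcl : ∀ x : A, μ c x = α x) (hcr : ∀ x : A, μ x c = α x)
    (hR1 : TensorProduct.map Δ α R = mulT3 μ (R13e c R) (R23e c R))
    (hR2 : (TensorProduct.assoc k A A A).symm (TensorProduct.map α Δ R)
      = mulT3 μ (R13e c R) (R12e c R))
    (hR3 : ∀ x : A, mulT2 μ ((TensorProduct.comm k A A) (Δ x)) R = mulT2 μ R (Δ x))
    (hsurj : Function.Surjective α) :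
    (TensorProduct.map Δ α (TensorProduct.map α α R)
        = mulT3 μ (R13e c (TensorProduct.map α α R)) (R23e c (TensorProduct.map α α R))) ∧
    ((TensorProduct.assoc k A A A).symm (TensorProduct.map α Δ (TensorProduct.map α α R))
        = mulT3 μ (R13e c (TensorProduct.map α α R)) (R12e c (TensorProduct.map α α R))) ∧
    (∀ x : A, mulT2 μ ((TensorProduct.comm k A A) (Δ x)) (TensorProduct.map α α R)
        = mulT2 μ (TensorProduct.map α α R) (Δ x)) :=
  ⟨twisted_R_map_comul_alpha hαμ hαΔ hcl hcr hR1,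
    twisted_R_map_alpha_comul hαμ hαΔ hcl hcr hR2,
    twisted_R_quasi_cocommutative hαμ hαΔ hsurj hR3⟩

/-- If `(A, μ, Δ, α, c, R)` is a quasi-triangular Hom-bialgebra with `α`
surjective, then `(A, μ, Δ, α, c, Rᵅ)` with `Rᵅ = (α ⊗ α)(R)` is also a quasi-triangular
Hom-bialgebra. -/
theorem twisted_R_quasi_triangular
    (μ : A →ₗ[k] A →ₗ[k] A) (Δ : A →ₗ[k] A ⊗[k] A) (α : A →ₗ[k] A) (c : A) (R : A ⊗[k] A)
    (hαμ : ∀ x y : A, α (μ x y) = μ (α x) (α y))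
    (hassoc : ∀ x y z : A, μ (μ x y) (α z) = μ (α x) (μ y z))
    (hαΔ : Δ ∘ₗ α = TensorProduct.map α α ∘ₗ Δ)
    (hcoassoc : (TensorProduct.assoc k A A A).toLinearMap ∘ₗ TensorProduct.map Δ α ∘ₗ Δ
      = TensorProduct.map α Δ ∘ₗ Δ)
    (hcompat : ∀ x y : A, Δ (μ x y) = mulT2 μ (Δ x) (Δ y))
    (hcl : ∀ x : A, μ c x = α x) (hcr : ∀ x : A, μ x c = α x)
    (hR1 : TensorProduct.map Δ α R = mulT3 μ (R13e c R) (R23e c R))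
    (hR2 : (TensorProduct.assoc k A A A).symm (TensorProduct.map α Δ R)
      = mulT3 μ (R13e c R) (R12e c R))
    (hR3 : ∀ x : A, mulT2 μ ((TensorProduct.comm k A A) (Δ x)) R = mulT2 μ R (Δ x))
    (hsurj : Function.Surjective α) :
    (TensorProduct.map Δ α (TensorProduct.map α α R)
        = mulT3 μ (R13e c (TensorProduct.map α α R)) (R23e c (TensorProduct.map α α R))) ∧
    ((TensorProduct.assoc k A A A).symm (TensorProduct.map α Δ (TensorProduct.map α α R))
        = mulT3 μ (R13e c (TensorProduct.map α α R)) (R12e c (TensorProduct.map α α R))) ∧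
    (∀ x : A, mulT2 μ ((TensorProduct.comm k A A) (Δ x)) (TensorProduct.map α α R)
        = mulT2 μ (TensorProduct.map α α R) (Δ x)) :=
  twisted_R_quasi_triangular_general μ Δ α c R hαμ hαΔ hcl hcr hR1 hR2 hR3 hsurj
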